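/- (Gauge potential for curl-free two-particle potentials.) Let K be a positive integer and let f_{1,μ}, f_{2,μ} : ℝ⁸ → ℂ^{K×K} (μ = 0,1,2,3) be twice continuously differentiable functions satisfying ∂f_{2,ν}/∂x_1^μ = ∂f_{1,μ}/∂x_2^ν for all μ, ν = 0,…,3 on ℝ⁸. Then there exist a continuously differentiable function M : ℝ⁸ → ℂ^{K×K} and functions f̃_{1,μ}, f̃_{2,μ} : ℝ⁴ → ℂ^{K×K} such that for all (x_1,x_2) ∈ ℝ⁸ and all μ: f_{1,μ}(x_1,x_2) = (∂M/∂x_1^μ)(x_1,x_2) + f̃_{1,μ}(x_1) and f_{2,μ}(x_1,x_2) = (∂M/∂x_2^μ)(x_1,x_2) + f̃_{2,μ}(x_2). In particular, such potentials are gauge-equivalent to potentials depending only on the respective particle's own coordinate. -/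

import Mathlib

/-!
Write `ω₁ = ∑ μ, f_{1,μ} dx₁^μ` and `ω₂ = ∑ ν, f_{2,ν} dx₂^ν`; the hypothesis says that the mixed
`dx₁ ∧ dx₂` part of `d(ω₁ + ω₂)` vanishes. Poincaré's homotopy formula in the `x₁`-variables alone
gives `M(x₁, x₂) = ∫₀¹ ω₁(t x₁, x₂)(x₁) dt`. Differentiating under the integral sign and using the
hypothesis, `∂M/∂x₂^ν` is the integral of `d/dt f_{2,ν}(t x₁, x₂)`, so
`∂M/∂x₂^ν = f_{2,ν}(x₁, x₂) - f_{2,ν}(0, x₂)`. By symmetry of the second derivatives of `M`,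
`∂/∂x₂^ν (f_{1,μ} - ∂M/∂x₁^μ) = ∂f_{1,μ}/∂x₂^ν - ∂f_{2,ν}/∂x₁^μ = 0`, so `f_{1,μ} - ∂M/∂x₁^μ`
depends on `x₁` alone.
-/

open Matrix

noncomputable section

attribute [local instance] Matrix.normedAddCommGroup Matrix.normedSpace

/-- Two-particle configuration space-time `ℝ⁸ = ℝ⁴ × ℝ⁴`. -/
abbrev Pt := (Fin 4 → ℝ) × (Fin 4 → ℝ)

/-- The coordinate direction `x_k^μ` in `ℝ⁸`. -/
def dir (k : Fin 2) (μ : Fin 4) : Pt :=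
  if k = 0 then (Pi.single μ 1, 0) else (0, Pi.single μ 1)

/-- Partial derivative `∂f/∂x_k^μ` on `ℝ⁸`. -/
def pdk {F : Type*} [NormedAddCommGroup F] [NormedSpace ℝ F]
    (k : Fin 2) (μ : Fin 4) (f : Pt → F) (X : Pt) : F :=
  fderiv ℝ f X (dir k μ)

open MeasureTheory ContinuousLinearMap Filter Topology

universe u

section ParametricIntegral

variable {H E : Type*} [NormedAddCommGroup H] [NormedSpace ℝ H]
  [NormedAddCommGroup E] [NormedSpace ℝ E]

theorem fderiv_uncurry_left {f : H → ℝ → E} {x : H} {t : ℝ}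
    (hf : DifferentiableAt ℝ (Function.uncurry f) (x, t)) :
    fderiv ℝ (fun x => f x t) x = fderiv ℝ (Function.uncurry f) (x, t) ∘L inl ℝ H ℝ :=
  (hf.hasFDerivAt.comp (f := fun e : H => (e, t)) x (hasFDerivAt_prodMk_left x t)).fderiv

theorem continuous_fderiv_uncurry_left {f : H → ℝ → E} (hf : ContDiff ℝ 1 (Function.uncurry f)) :
    Continuous fun p : H × ℝ => fderiv ℝ (fun x => f x p.2) p.1 := by
  simp only [fderiv_uncurry_left (hf.differentiable one_ne_zero _)]
  exact (hf.continuous_fderiv one_ne_zero).clm_comp continuous_const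

theorem hasFDerivAt_intervalIntegral_of_contDiff {f : H → ℝ → E}
    (hf : ContDiff ℝ 1 (Function.uncurry f)) (a b : ℝ) (x₀ : H) :
    HasFDerivAt (fun x => ∫ t in a..b, f x t)
      (∫ t in a..b, fderiv ℝ (fun x => f x t) x₀) x₀ := by
  have hf'_cont := continuous_fderiv_uncurry_left hf
  obtain ⟨C, hC⟩ := isCompact_uIcc.exists_bound_of_continuousOn
    (hf'_cont.comp (Continuous.prodMk_right x₀)).continuousOn
  have h_near : ∀ᶠ x in 𝓝 x₀, ∀ t ∈ Set.uIcc a b, ‖fderiv ℝ (fun x => f x t) x‖ < C + 1 :=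
    isCompact_uIcc.eventually_forall_of_forall_eventually fun t ht =>
      hf'_cont.norm.continuousAt.eventually (gt_mem_nhds ((hC t ht).trans_lt (lt_add_one C)))
  refine intervalIntegral.hasFDerivAt_integral_of_dominated_of_fderiv_le
    (F' := fun x t => fderiv ℝ (fun x => f x t) x) (bound := fun _ => C + 1) h_near ?_ ?_ ?_ ?_
    intervalIntegrable_const ?_
  · exact Eventually.of_forall fun x =>
      (hf.continuous.comp (Continuous.prodMk_right x)).aestronglyMeasurable
  · exact (hf.continuous.comp (Continuous.prodMk_right x₀)).intervalIntegrable a b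
  · exact (hf'_cont.comp (Continuous.prodMk_right x₀)).aestronglyMeasurable
  · exact Eventually.of_forall fun t ht x hx => (hx t (Set.uIoc_subset_uIcc ht)).le
  · exact Eventually.of_forall fun t _ x _ => ((hf.differentiable one_ne_zero _).comp x
      (differentiableAt_id.prodMk (differentiableAt_const t))).hasFDerivAt

end ParametricIntegral

-- The induction passes from `E` to `H →L[ℝ] E`, hence the common universe.
theorem contDiff_intervalIntegral_of_contDiff {H E : Type u} [NormedAddCommGroup H]
    [NormedSpace ℝ H] [NormedAddCommGroup E] [NormedSpace ℝ E] [CompleteSpace E] {n : ℕ}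
    {f : H → ℝ → E} (hf : ContDiff ℝ n (Function.uncurry f)) (a b : ℝ) :
    ContDiff ℝ n (fun x => ∫ t in a..b, f x t) := by
  induction n generalizing E with
  | zero =>
    exact contDiff_zero.2 (intervalIntegral.continuous_parametric_intervalIntegral_of_continuous'
      (contDiff_zero.1 hf) a b)
  | succ n ih =>
    push_cast at hf ⊢
    have hf₁ : ContDiff ℝ 1 (Function.uncurry f) := hf.of_le le_add_self
    have hderiv x := hasFDerivAt_intervalIntegral_of_contDiff hf₁ a b x
    rw [contDiff_succ_iff_fderiv]
    refine ⟨fun x => (hderiv x).differentiableAt, by simp, ?_⟩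
    rw [funext fun x => (hderiv x).fderiv]
    apply ih
    have h_partial : Function.uncurry (fun x t => fderiv ℝ (fun x => f x t) x) =
        fun p => fderiv ℝ (Function.uncurry f) p ∘L inl ℝ H ℝ :=
      funext fun p => fderiv_uncurry_left (hf₁.differentiable one_ne_zero _)
    rw [h_partial]
    exact (hf.fderiv_right le_rfl).clm_comp contDiff_const

section RadialPrimitive

variable {E F G : Type u} [NormedAddCommGroup E] [NormedSpace ℝ E] [NormedAddCommGroup F]
  [NormedSpace ℝ F] [NormedAddCommGroup G] [NormedSpace ℝ G] [CompleteSpace G]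

/-- Poincaré's homotopy operator in the first factor only: `ω` is integrated along the segment
from `(0, x₂)` to `(x₁, x₂)`. -/
def radialPrimitive (ω : E × F → E →L[ℝ] G) (X : E × F) : G :=
  ∫ t in (0 : ℝ)..1, ω (t • X.1, X.2) X.1

theorem contDiff_radialPrimitive {n : ℕ} {ω : E × F → E →L[ℝ] G}
    (hω : ContDiff ℝ n ω) : ContDiff ℝ n (radialPrimitive ω) :=
  contDiff_intervalIntegral_of_contDiff (f := fun (X : E × F) (t : ℝ) => ω (t • X.1, X.2) X.1)
    ((hω.comp (by fun_prop)).clm_apply (by fun_prop)) 0 1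

/-- The mixed `(E, F)`-component of `d(ω₁ + ω₂)` vanishes. -/
def MixedClosed (ω₁ : E × F → E →L[ℝ] G) (ω₂ : E × F → F →L[ℝ] G) : Prop :=
  ∀ X v w, fderiv ℝ ω₂ X (v, 0) w = fderiv ℝ ω₁ X (0, w) v

variable {ω₁ : E × F → E →L[ℝ] G} {ω₂ : E × F → F →L[ℝ] G}

theorem fderiv_radialPrimitive_comp_inr (hω₁ : ContDiff ℝ 1 ω₁) (hω₂ : ContDiff ℝ 1 ω₂)
    (hclosed : MixedClosed ω₁ ω₂) (X : E × F) :
    fderiv ℝ (radialPrimitive ω₁) X ∘L inr ℝ E F = ω₂ X - ω₂ (0, X.2) := by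
  set Φ : E × F → ℝ → G := fun X t => ω₁ (t • X.1, X.2) X.1
  have hΦ : ContDiff ℝ 1 (Function.uncurry Φ) := (hω₁.comp (by fun_prop)).clm_apply (by fun_prop)
  have hΦ' : ∀ t w, fderiv ℝ (fun X => Φ X t) X (0, w) = fderiv ℝ ω₁ (t • X.1, X.2) (0, w) X.1 := by
    intro t w
    have h : HasFDerivAt (fun X => Φ X t) _ X :=
      ((hω₁.differentiable one_ne_zero _).hasFDerivAt.comp X
        ((t • fst ℝ E F).prod (snd ℝ E F)).hasFDerivAt).clm_apply (fst ℝ E F).hasFDerivAt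
    simp [h.fderiv]
  have hpath : ∀ t w, HasDerivAt (fun s : ℝ => ω₂ (s • X.1, X.2) w)
      (fderiv ℝ ω₂ (t • X.1, X.2) (X.1, 0) w) t := by
    intro t w
    have h : HasDerivAt (fun s : ℝ => (s • X.1, X.2)) (X.1, 0) t := by
      simpa using ((hasDerivAt_id t).smul_const X.1).prodMk (hasDerivAt_const t X.2)
    exact ((hω₂.differentiable one_ne_zero _).hasFDerivAt.comp_hasDerivAt t h).clm_apply
      (hasDerivAt_const t w) |>.congr_deriv (by simp)
  have hint : IntervalIntegrable (fun t => fderiv ℝ (fun X => Φ X t) X) volume 0 1 :=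
    ((continuous_fderiv_uncurry_left hΦ).comp (Continuous.prodMk_right X)).intervalIntegrable 0 1
  have hM : HasFDerivAt (radialPrimitive ω₁)
      (∫ t in (0 : ℝ)..1, fderiv ℝ (fun X => Φ X t) X) X :=
    hasFDerivAt_intervalIntegral_of_contDiff hΦ 0 1 X
  ext w
  rw [ContinuousLinearMap.comp_apply, hM.fderiv, intervalIntegral_apply hint]
  simp only [inr_apply, hΦ', ← hclosed _ X.1 w]
  rw [intervalIntegral.integral_eq_sub_of_hasDerivAt (fun t _ => hpath t w)]
  · simp
  · exact (((hω₂.continuous_fderiv one_ne_zero).comp (by fun_prop)).clm_apply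
      continuous_const).clm_apply continuous_const |>.intervalIntegrable 0 1

theorem fderiv_fderiv_radialPrimitive_inl_inr (hω₁ : ContDiff ℝ 2 ω₁) (hω₂ : ContDiff ℝ 1 ω₂)
    (hclosed : MixedClosed ω₁ ω₂) (X : E × F) (v : E) (w : F) :
    fderiv ℝ (fderiv ℝ (radialPrimitive ω₁)) X (v, 0) (0, w) = fderiv ℝ ω₁ X (0, w) v := by
  have hM : ContDiff ℝ 2 (radialPrimitive ω₁) := contDiff_radialPrimitive hω₁
  have hM' : HasFDerivAt (fun Z => fderiv ℝ (radialPrimitive ω₁) Z ∘L inr ℝ E F)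
      (fderiv ℝ ω₂ X - fderiv ℝ ω₂ (0, X.2) ∘L (inr ℝ E F ∘L snd ℝ E F)) X := by
    rw [funext (fderiv_radialPrimitive_comp_inr (hω₁.of_le one_le_two) hω₂ hclosed)]
    exact (hω₂.differentiable one_ne_zero _).hasFDerivAt.sub
      ((hω₂.differentiable one_ne_zero _).hasFDerivAt.comp X (inr ℝ E F ∘L snd ℝ E F).hasFDerivAt)
  have hM'' := ((hM.fderiv_right le_rfl).differentiable one_ne_zero X).hasFDerivAt.clm_comp
    (hasFDerivAt_const (inr ℝ E F) X)
  simpa [Prod.mk_zero_zero, hclosed X v w] using congr($(hM''.unique hM') (v, 0) w)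

theorem sub_fderiv_radialPrimitive_comp_inl_eq (hω₁ : ContDiff ℝ 2 ω₁) (hω₂ : ContDiff ℝ 1 ω₂)
    (hclosed : MixedClosed ω₁ ω₂) (x : E) (y y' : F) :
    ω₁ (x, y) - fderiv ℝ (radialPrimitive ω₁) (x, y) ∘L inl ℝ E F =
      ω₁ (x, y') - fderiv ℝ (radialPrimitive ω₁) (x, y') ∘L inl ℝ E F := by
  have hM : ContDiff ℝ 2 (radialPrimitive ω₁) := contDiff_radialPrimitive hω₁
  have hderiv : ∀ y, HasFDerivAt
      (fun y => ω₁ (x, y) - fderiv ℝ (radialPrimitive ω₁) (x, y) ∘L inl ℝ E F)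
      (0 : F →L[ℝ] E →L[ℝ] G) y := by
    intro y
    have h₁ := (hω₁.differentiable two_ne_zero (x, y)).hasFDerivAt.comp y
      (hasFDerivAt_prodMk_right (𝕜 := ℝ) x y)
    have h₂ := (((hM.fderiv_right le_rfl).differentiable one_ne_zero (x, y)).hasFDerivAt.comp y
      (hasFDerivAt_prodMk_right (𝕜 := ℝ) x y)).clm_comp (hasFDerivAt_const (inl ℝ E F) y)
    refine (h₁.sub h₂).congr_fderiv ?_
    ext w v
    have hsymm := (hM.contDiffAt (x := (x, y))).isSymmSndFDerivAt (by simp)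
    simp [hsymm (0, w) (v, 0), fderiv_fderiv_radialPrimitive_inl_inr hω₁ hω₂ hclosed]
  exact is_const_of_fderiv_eq_zero (fun y => (hderiv y).differentiableAt)
    (fun y => (hderiv y).fderiv) y y'

theorem exists_potential_of_mixed_closed (hω₁ : ContDiff ℝ 2 ω₁) (hω₂ : ContDiff ℝ 1 ω₂)
    (hclosed : MixedClosed ω₁ ω₂) :
    ∃ (M : E × F → G) (g₁ : E → E →L[ℝ] G) (g₂ : F → F →L[ℝ] G), ContDiff ℝ 2 M ∧
      (∀ X, ω₁ X = fderiv ℝ M X ∘L inl ℝ E F + g₁ X.1) ∧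
      (∀ X, ω₂ X = fderiv ℝ M X ∘L inr ℝ E F + g₂ X.2) := by
  refine ⟨radialPrimitive ω₁,
    fun x => ω₁ (x, 0) - fderiv ℝ (radialPrimitive ω₁) (x, 0) ∘L inl ℝ E F, fun y => ω₂ (0, y), contDiff_radialPrimitive hω₁, fun ⟨x, y⟩ => ?_, fun X => ?_⟩
  · dsimp only
    rw [← sub_fderiv_radialPrimitive_comp_inl_eq hω₁ hω₂ hclosed x y 0]
    abel
  · rw [fderiv_radialPrimitive_comp_inr (hω₁.of_le one_le_two) hω₂ hclosed X]
    abel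

end RadialPrimitive

section Coordinates

variable {ι H G : Type*} [Fintype ι] [DecidableEq ι] [NormedAddCommGroup H] [NormedSpace ℝ H]
  [NormedAddCommGroup G] [NormedSpace ℝ G]

theorem fderiv_piRing_symm_apply {f : ι → H → G} {X : H} (hf : ∀ i, DifferentiableAt ℝ (f i) X)
    (u : H) (v : ι → ℝ) :
    fderiv ℝ (fun X => (ContinuousLinearEquiv.piRing (𝕜 := ℝ) (E := G) ι).symm fun i => f i X)
      X u v = ∑ i, v i • fderiv ℝ (f i) X u := by
  have h : HasFDerivAt
      (fun X => (ContinuousLinearEquiv.piRing (𝕜 := ℝ) (E := G) ι).symm fun i => f i X) _ X :=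
    (ContinuousLinearEquiv.piRing (𝕜 := ℝ) (E := G) ι).symm.hasFDerivAt.comp X
      (hasFDerivAt_pi.2 fun i => (hf i).hasFDerivAt)
  rw [h.fderiv]
  exact LinearEquiv.piRing_symm_apply (R := ℝ) (S := ℝ) _ _

theorem piRing_symm_apply_single (f : ι → G) (i : ι) :
    (ContinuousLinearEquiv.piRing (𝕜 := ℝ) ι).symm f (Pi.single i 1) = f i :=
  (LinearEquiv.piRing_symm_apply (R := ℝ) (S := ℝ) f _).trans (by simp [Pi.single_apply])

end Coordinates

theorem fderiv_apply_inl_eq_sum_pdk {G : Type*} [NormedAddCommGroup G] [NormedSpace ℝ G]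
    (f : Pt → G) (X : Pt) (v : Fin 4 → ℝ) :
    fderiv ℝ f X (v, 0) = ∑ μ, v μ • pdk 0 μ f X := by
  have hv : ((v, 0) : Pt) = ∑ μ, v μ • dir 0 μ := by
    ext i <;> simp [dir, Prod.fst_sum, Prod.snd_sum, Pi.single_apply]
  simp only [hv, map_sum, map_smul, pdk]

theorem fderiv_apply_inr_eq_sum_pdk {G : Type*} [NormedAddCommGroup G] [NormedSpace ℝ G]
    (f : Pt → G) (X : Pt) (w : Fin 4 → ℝ) :
    fderiv ℝ f X (0, w) = ∑ ν, w ν • pdk 1 ν f X := by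
  have hw : ((0, w) : Pt) = ∑ ν, w ν • dir 1 ν := by
    ext i <;> simp [dir, Prod.fst_sum, Prod.snd_sum, Pi.single_apply]
  simp only [hw, map_sum, map_smul, pdk]

theorem gauge_potential_exists_general
    (K : ℕ)
    (f₁ f₂ : Fin 4 → Pt → Matrix (Fin K) (Fin K) ℂ)
    (hf₁ : ∀ μ, ContDiff ℝ 2 (f₁ μ)) (hf₂ : ∀ μ, ContDiff ℝ 2 (f₂ μ))
    (hsym : ∀ μ ν : Fin 4, ∀ X : Pt, pdk 0 μ (f₂ ν) X = pdk 1 ν (f₁ μ) X) :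
    ∃ (M : Pt → Matrix (Fin K) (Fin K) ℂ)
      (g₁ g₂ : Fin 4 → (Fin 4 → ℝ) → Matrix (Fin K) (Fin K) ℂ),
      ContDiff ℝ 1 M ∧
      (∀ μ : Fin 4, ∀ X : Pt, f₁ μ X = pdk 0 μ M X + g₁ μ X.1) ∧
      (∀ μ : Fin 4, ∀ X : Pt, f₂ μ X = pdk 1 μ M X + g₂ μ X.2) := by
  -- `e f` is the linear form `v ↦ ∑ μ, v μ • f μ`
  let e := (ContinuousLinearEquiv.piRing (𝕜 := ℝ) (E := Matrix (Fin K) (Fin K) ℂ) (Fin 4)).symm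
  have hclosed : MixedClosed (fun X => e fun μ => f₁ μ X) (fun X => e fun ν => f₂ ν X) := by
    intro X v w
    rw [fderiv_piRing_symm_apply (fun μ => (hf₁ μ).differentiable two_ne_zero X),
      fderiv_piRing_symm_apply (fun ν => (hf₂ ν).differentiable two_ne_zero X)]
    simp only [fderiv_apply_inl_eq_sum_pdk, fderiv_apply_inr_eq_sum_pdk, hsym, Finset.smul_sum]
    rw [Finset.sum_comm]
    simp only [smul_comm (w _)]
  obtain ⟨M, g₁, g₂, hM, h₁, h₂⟩ := exists_potential_of_mixed_closed
    (e.contDiff.comp (contDiff_pi.2 hf₁)) ((e.contDiff.comp (contDiff_pi.2 hf₂)).of_le one_le_two)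
    hclosed
  refine ⟨M, fun μ x => g₁ x (Pi.single μ 1), fun μ y => g₂ y (Pi.single μ 1), hM.of_le one_le_two,
    fun μ X => ?_, fun μ X => ?_⟩
  · simpa [e, piRing_symm_apply_single, pdk, dir] using congr($(h₁ X) (Pi.single μ 1))
  · simpa [e, piRing_symm_apply_single, pdk, dir] using congr($(h₂ X) (Pi.single μ 1))

theorem gauge_potential_exists
    (K : ℕ) (hK : 0 < K)
    (f₁ f₂ : Fin 4 → Pt → Matrix (Fin K) (Fin K) ℂ)
    (hf₁ : ∀ μ, ContDiff ℝ 2 (f₁ μ)) (hf₂ : ∀ μ, ContDiff ℝ 2 (f₂ μ))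
    (hsym : ∀ μ ν : Fin 4, ∀ X : Pt, pdk 0 μ (f₂ ν) X = pdk 1 ν (f₁ μ) X) :
    ∃ (M : Pt → Matrix (Fin K) (Fin K) ℂ)
      (g₁ g₂ : Fin 4 → (Fin 4 → ℝ) → Matrix (Fin K) (Fin K) ℂ),
      ContDiff ℝ 1 M ∧
      (∀ μ : Fin 4, ∀ X : Pt, f₁ μ X = pdk 0 μ M X + g₁ μ X.1) ∧
      (∀ μ : Fin 4, ∀ X : Pt, f₂ μ X = pdk 1 μ M X + g₂ μ X.2) :=
  gauge_potential_exists_general K f₁ f₂ hf₁ hf₂ hsym
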